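/- Two-state problem, dominated regime: let 0 ≤ γ < 1, let N be the 2×2 real symmetric matrix with diagonal entries 1 and off-diagonal entries −γ, and let η_1, η_2 > 0 with η_1 + η_2 = 1. If η_2 < γ² η_1 (i.e., √(η_2/η_1) < γ), then the maximum of η_1 x_1 + η_2 x_2 over x ∈ ℝ² with x_1, x_2 ≥ 0 and N − diag(x) positive semidefinite equals η_1 (1 − γ²), and it is attained at x_1 = 1 − γ², x_2 = 0. -/

import Mathlib

/-!
Writing `a = 1 - x₁`, `b = 1 - x₂`, positive semidefiniteness of `N - diag x` means
`a, b ≥ 0` and `γ² ≤ a b`. Then `(a + γ² b)² ≥ 4 γ² a b ≥ 4 γ⁴`, i.e. `a + γ² b ≥ 2 γ²`, so the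
feasible set lies below the line `x₁ + γ² x₂ = 1 - γ²`, the tangent to its boundary at
`(1 - γ², 0)`. When `η₂ ≤ γ² η₁` the objective is dominated by `η₁ (x₁ + γ² x₂)` on `x₂ ≥ 0`.
-/

open Matrix

theorem Matrix.posSemidef_fin_two_iff {a b c : ℝ} :
    !![a, c; c, b].PosSemidef ↔ 0 ≤ a ∧ 0 ≤ b ∧ c ^ 2 ≤ a * b := by
  constructor
  · intro hM
    have hdet := hM.det_nonneg
    rw [det_fin_two_of] at hdet
    exact ⟨hM.diag_nonneg (i := 0), hM.diag_nonneg (i := 1), by linarith⟩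
  · rintro ⟨ha, hb, hD⟩
    have hHerm : !![a, c; c, b].IsHermitian := by
      ext i j; fin_cases i <;> fin_cases j <;> rfl
    refine posSemidef_iff_dotProduct_mulVec.2 ⟨hHerm, fun v => ?_⟩
    have hquad : star v ⬝ᵥ (!![a, c; c, b] *ᵥ v) =
        a * v 0 ^ 2 + 2 * c * v 0 * v 1 + b * v 1 ^ 2 := by
      simp only [star_trivial, dotProduct, mulVec, Fin.sum_univ_two, of_apply, cons_val',
        cons_val_zero, cons_val_one, empty_val', cons_val_fin_one]
      ring
    rw [hquad]
    -- `a Q = (a v₀ + c v₁)² + (a b - c²) v₁²`, and symmetrically for `b Q`.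
    have hsum : 0 ≤ (a + b) * (a * v 0 ^ 2 + 2 * c * v 0 * v 1 + b * v 1 ^ 2) := by
      nlinarith [sq_nonneg (a * v 0 + c * v 1), sq_nonneg (c * v 0 + b * v 1),
        mul_nonneg (sub_nonneg.2 hD) (add_nonneg (sq_nonneg (v 0)) (sq_nonneg (v 1)))]
    rcases (add_nonneg ha hb).eq_or_lt with hab | hab
    · obtain rfl : a = 0 := by linarith
      obtain rfl : b = 0 := by linarith
      obtain rfl : c = 0 := by nlinarith
      simp
    · exact nonneg_of_mul_nonneg_right hsum hab

theorem Matrix.fin_two_sub_diagonal (a b c : ℝ) (x : Fin 2 → ℝ) :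
    !![a, c; c, b] - diagonal x = !![a - x 0, c; c, b - x 1] := by
  ext i j; fin_cases i <;> fin_cases j <;> simp

theorem two_mul_sq_le_add_sq_mul {a b c : ℝ} (ha : 0 ≤ a) (hb : 0 ≤ b) (h : c ^ 2 ≤ a * b) :
    2 * c ^ 2 ≤ a + c ^ 2 * b := by
  nlinarith [sq_nonneg (a - c ^ 2 * b), sq_nonneg c, mul_nonneg (sq_nonneg c) hb]

theorem add_sq_mul_le_of_posSemidef {γ : ℝ} {x : Fin 2 → ℝ}
    (hx : (!![1, -γ; -γ, 1] - diagonal x).PosSemidef) :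
    x 0 + γ ^ 2 * x 1 ≤ 1 - γ ^ 2 := by
  rw [fin_two_sub_diagonal, posSemidef_fin_two_iff, neg_sq] at hx
  obtain ⟨ha, hb, hab⟩ := hx
  linarith [two_mul_sq_le_add_sq_mul ha hb hab]

theorem two_state_dominated_general
    (γ η₁ η₂ : ℝ) (hγ0 : 0 ≤ γ) (hγ1 : γ < 1)
    (hη₁ : 0 < η₁)
    (h : η₂ < γ ^ 2 * η₁) :
    IsGreatest {p : ℝ | ∃ x : Fin 2 → ℝ, 0 ≤ x 0 ∧ 0 ≤ x 1 ∧
        (!![1, -γ; -γ, 1] - Matrix.diagonal x).PosSemidef ∧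
        p = η₁ * x 0 + η₂ * x 1}
      (η₁ * (1 - γ ^ 2)) ∧
    (0 ≤ 1 - γ ^ 2 ∧
      (!![1, -γ; -γ, 1] - Matrix.diagonal ![1 - γ ^ 2, 0]).PosSemidef ∧
      η₁ * (1 - γ ^ 2) + η₂ * 0 = η₁ * (1 - γ ^ 2)) := by
  have hγsq : 0 ≤ 1 - γ ^ 2 := by nlinarith
  have hvertex : (!![1, -γ; -γ, 1] - diagonal ![1 - γ ^ 2, 0]).PosSemidef := by
    rw [fin_two_sub_diagonal, posSemidef_fin_two_iff]
    simp [sq_nonneg]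
  refine ⟨⟨⟨![1 - γ ^ 2, 0], hγsq, le_rfl, hvertex, by simp⟩, ?_⟩, hγsq, hvertex, by ring⟩
  rintro _ ⟨x, -, hx1, hx, rfl⟩
  have hline := add_sq_mul_le_of_posSemidef hx
  linarith [mul_le_mul_of_nonneg_left hline hη₁.le, mul_le_mul_of_nonneg_right h.le hx1]

/-- Two-state unambiguous discrimination, dominated regime `√(η₂/η₁) < γ`: the
maximum success probability is `η₁ (1 - γ²)`, attained at
`x₁ = 1 - γ²`, `x₂ = 0`. -/
theorem two_state_dominated
    (γ η₁ η₂ : ℝ) (hγ0 : 0 ≤ γ) (hγ1 : γ < 1)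
    (hη₁ : 0 < η₁) (hη₂ : 0 < η₂) (hsum : η₁ + η₂ = 1)
    (h : η₂ < γ ^ 2 * η₁) :
    IsGreatest {p : ℝ | ∃ x : Fin 2 → ℝ, 0 ≤ x 0 ∧ 0 ≤ x 1 ∧
        (!![1, -γ; -γ, 1] - Matrix.diagonal x).PosSemidef ∧
        p = η₁ * x 0 + η₂ * x 1}
      (η₁ * (1 - γ ^ 2)) ∧
    (0 ≤ 1 - γ ^ 2 ∧
      (!![1, -γ; -γ, 1] - Matrix.diagonal ![1 - γ ^ 2, 0]).PosSemidef ∧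
      η₁ * (1 - γ ^ 2) + η₂ * 0 = η₁ * (1 - γ ^ 2)) :=
  two_state_dominated_general γ η₁ η₂ hγ0 hγ1 hη₁ h
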